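/- Let H0 and H1 be complex Hilbert spaces and let A0 on H0 and A1 on H1 be bounded self-adjoint operators whose spectra are disjoint, with d := dist(spectrum(A0), spectrum(A1)) > 0. Assume in addition that the convex hull of the real spectrum of A0 is disjoint from the spectrum of A1, or the spectrum of A0 is disjoint from the convex hull of the real spectrum of A1 (this covers both the case of subordinated spectra and the case where one spectrum lies in a finite gap of the other). Let B : H1 → H0 and C : H0 → H1 be bounded operators such that √(‖B‖·‖C‖) < d/2. Then there exists a unique bounded operator K : H0 → H1 with 2·‖B‖·‖K‖ ≤ d satisfying the Riccati equation K A0 − A1 K + K B K = C; moreover this K satisfies ‖K‖ ≤ ‖C‖ / (d/2 + √(d²/4 − ‖B‖·‖C‖)). (Bounded-operator version of Theorem 4.7 (ii) of the paper.) -/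

import Mathlib

/-!
Shift both operators by the midpoint `c` of the convex hull `[a, b]` of `σ(A₀)`: then
`‖A₀ - c‖ ≤ r := (b - a) / 2`, while `σ(A₁)` stays at distance at least `r + d` from `c`, so
`‖(A₁ - c)⁻¹‖ ≤ (r + d)⁻¹`. Written as `L = (A₁ - c)⁻¹ (L (A₀ - c) - D)`, the Sylvester equation
`L A₀ - A₁ L = D` is a contraction, so the Sylvester operator `S` is onto with `d ‖L‖ ≤ ‖S L‖`;
the other alternative of the gap condition reduces to this one by taking adjoints.
The Riccati equation then reads `K = S⁻¹ (C - K B K)`, a contraction of the ball whose radius `ρ`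
is the smaller root of `‖B‖ ρ² - d ρ + ‖C‖`, and the a priori estimate
`d ‖K‖ ≤ ‖C‖ + ‖B‖ ‖K‖²` forces every solution with `2 ‖B‖ ‖K‖ ≤ d` into that ball.
-/

open ContinuousLinearMap

theorem Metric.sInf_dist_le {X : Type*} [PseudoMetricSpace X] {s t : Set X} {x y : X}
    (hx : x ∈ s) (hy : y ∈ t) : sInf {r | ∃ x ∈ s, ∃ y ∈ t, r = dist x y} ≤ dist x y :=
  csInf_le ⟨0, by rintro _ ⟨x, -, y, -, rfl⟩; exact dist_nonneg⟩ ⟨x, hx, y, hy, rfl⟩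

theorem Metric.nonempty_of_sInf_dist_pos {X : Type*} [PseudoMetricSpace X] {s t : Set X}
    (h : 0 < sInf {r | ∃ x ∈ s, ∃ y ∈ t, r = dist x y}) : s.Nonempty ∧ t.Nonempty := by
  by_contra! hst
  rcases s.eq_empty_or_nonempty with rfl | hs
  · simp at h
  · simp [hst hs] at h

theorem Real.exists_center_of_disjoint_convexHull {s t : Set ℝ} (hs : IsCompact s)
    (hne : s.Nonempty) (hst : Disjoint (convexHull ℝ s) t) {d : ℝ}
    (hd : ∀ x ∈ s, ∀ y ∈ t, d ≤ |x - y|) :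
    ∃ c r : ℝ, 0 ≤ r ∧ (∀ x ∈ s, |x - c| ≤ r) ∧ ∀ y ∈ t, r + d ≤ |y - c| := by
  set a := sInf s
  set b := sSup s
  have ha : a ∈ s := hs.sInf_mem hne
  have hb : b ∈ s := hs.sSup_mem hne
  have hmem : ∀ x ∈ s, a ≤ x ∧ x ≤ b := fun x hx =>
    ⟨csInf_le hs.bddBelow hx, le_csSup hs.bddAbove hx⟩
  have hab : a ≤ b := (hmem a ha).2
  refine ⟨(a + b) / 2, (b - a) / 2, by linarith, fun x hx => ?_, fun y hy => ?_⟩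
  · obtain ⟨hax, hxb⟩ := hmem x hx
    rw [abs_le]
    constructor <;> linarith
  · have hy' : y ∉ Set.Icc a b := fun h =>
      Set.disjoint_left.mp hst (segment_subset_convexHull ha hb (segment_eq_Icc hab ▸ h)) hy
    have hda := hd a ha y hy
    have hdb := hd b hb y hy
    rw [Set.mem_Icc, not_and_or, not_le, not_le] at hy'
    rcases hy' with hya | hby
    · rw [abs_of_pos (by linarith : 0 < a - y)] at hda
      rw [abs_of_neg (by linarith)]
      linarith
    · rw [abs_of_neg (by linarith : b - y < 0)] at hdb
      rw [abs_of_pos (by linarith)]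
      linarith

section SmallRoot

/-- The smaller root of `b x² - d x + c`, in the rationalized form that stays valid at `b = 0`. -/
noncomputable def smallRoot (b c d : ℝ) : ℝ :=
  c / (d / 2 + √(d ^ 2 / 4 - b * c))

variable {b c d : ℝ}

theorem smallRoot_nonneg (hc : 0 ≤ c) (hd : 0 ≤ d) : 0 ≤ smallRoot b c d :=
  div_nonneg hc (by positivity)

theorem mul_smallRoot (hbc : b * c ≤ d ^ 2 / 4) (hd : 0 < d) :
    b * smallRoot b c d = d / 2 - √(d ^ 2 / 4 - b * c) := by
  have hs := Real.sq_sqrt (sub_nonneg.2 hbc)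
  have hpos : 0 < d / 2 + √(d ^ 2 / 4 - b * c) := by positivity
  rw [smallRoot, mul_div_assoc', div_eq_iff hpos.ne']
  nlinarith

theorem two_mul_mul_smallRoot_lt (hbc : b * c < d ^ 2 / 4) (hd : 0 < d) :
    2 * b * smallRoot b c d < d := by
  have := Real.sqrt_pos.2 (sub_pos.2 hbc)
  linarith [mul_smallRoot hbc.le hd]

theorem add_mul_smallRoot_sq (hbc : b * c ≤ d ^ 2 / 4) (hd : 0 < d) :
    c + b * smallRoot b c d ^ 2 = d * smallRoot b c d := by
  have hpos : 0 < d / 2 + √(d ^ 2 / 4 - b * c) := by positivity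
  have hc : (d / 2 + √(d ^ 2 / 4 - b * c)) * smallRoot b c d = c := by
    rw [smallRoot, mul_div_cancel₀ _ hpos.ne']
  linear_combination (smallRoot b c d) * mul_smallRoot hbc hd - hc

theorem le_smallRoot {x : ℝ} (hbc : b * c < d ^ 2 / 4) (hd : 0 < d) (hbx : 2 * b * x ≤ d)
    (hdx : d * x ≤ c + b * x ^ 2) : x ≤ smallRoot b c d := by
  have hρ := add_mul_smallRoot_sq hbc.le hd
  have hbρ := two_mul_mul_smallRoot_lt hbc hd
  -- `b x² - d x + c = (x - ρ) (b (x + ρ) - d)`, and the second factor is negative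
  by_contra! hlt
  nlinarith

end SmallRoot

section CStarAlgebra

variable {A : Type*} [CStarAlgebra A] {a : A}

theorem IsSelfAdjoint.sub_algebraMap_eq_cfc (ha : IsSelfAdjoint a) (c : ℝ) :
    a - algebraMap ℝ A c = cfc (· - c) a := by
  rw [cfc_sub _ _ a, cfc_id' ℝ a, cfc_const c a]

theorem IsSelfAdjoint.norm_sub_algebraMap_le (ha : IsSelfAdjoint a) {c r : ℝ} (hr : 0 ≤ r)
    (h : ∀ x ∈ spectrum ℝ a, |x - c| ≤ r) : ‖a - algebraMap ℝ A c‖ ≤ r := by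
  rw [ha.sub_algebraMap_eq_cfc]
  exact norm_cfc_le hr h

theorem IsSelfAdjoint.exists_units_sub_algebraMap (ha : IsSelfAdjoint a) {c ρ : ℝ} (hρ : 0 < ρ)
    (h : ∀ y ∈ spectrum ℝ a, ρ ≤ |y - c|) :
    ∃ u : Aˣ, (u : A) = a - algebraMap ℝ A c ∧ ‖(↑u⁻¹ : A)‖ ≤ ρ⁻¹ := by
  have hne : ∀ y ∈ spectrum ℝ a, y - c ≠ 0 := fun y hy h0 => by
    have := h y hy
    rw [h0, abs_zero] at this
    linarith
  refine ⟨cfcUnits (· - c) a hne, (ha.sub_algebraMap_eq_cfc c).symm,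
    norm_cfc_le (by positivity) fun y hy => ?_⟩
  rw [norm_inv, Real.norm_eq_abs]
  exact inv_anti₀ hρ (h y hy)

end CStarAlgebra

section Sylvester

variable {𝕜 E F : Type*} [NontriviallyNormedField 𝕜]
  [NormedAddCommGroup E] [NormedSpace 𝕜 E] [NormedAddCommGroup F] [NormedSpace 𝕜 F]

namespace ContinuousLinearMap

noncomputable def sylvester (A₀ : E →L[𝕜] E) (A₁ : F →L[𝕜] F) : (E →L[𝕜] F) →L[𝕜] E →L[𝕜] F :=
  (compL 𝕜 E E F).flip A₀ - compL 𝕜 E F F A₁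

@[simp]
theorem sylvester_apply (A₀ : E →L[𝕜] E) (A₁ : F →L[𝕜] F) (L : E →L[𝕜] F) :
    sylvester A₀ A₁ L = L ∘L A₀ - A₁ ∘L L :=
  rfl

theorem sylvester_sub_algebraMap (A₀ : E →L[𝕜] E) (A₁ : F →L[𝕜] F) (z : 𝕜) :
    sylvester (A₀ - algebraMap 𝕜 _ z) (A₁ - algebraMap 𝕜 _ z) = sylvester A₀ A₁ := by
  ext1 L
  simp only [sylvester_apply, comp_sub, sub_comp, Algebra.algebraMap_eq_smul_one, comp_smul,
    smul_comp, one_def, comp_id, id_comp]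
  abel

end ContinuousLinearMap

structure SylvesterSolvable (A₀ : E →L[𝕜] E) (A₁ : F →L[𝕜] F) (d : ℝ) : Prop where
  surjective : Function.Surjective (sylvester A₀ A₁)
  mul_norm_le : ∀ L, d * ‖L‖ ≤ ‖sylvester A₀ A₁ L‖

variable {A₀ : E →L[𝕜] E} {A₁ : F →L[𝕜] F} {d : ℝ}

theorem SylvesterSolvable.of_sub_algebraMap {z : 𝕜}
    (h : SylvesterSolvable (A₀ - algebraMap 𝕜 _ z) (A₁ - algebraMap 𝕜 _ z) d) :
    SylvesterSolvable A₀ A₁ d := by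
  obtain ⟨hsurj, hle⟩ := h
  rw [sylvester_sub_algebraMap] at hsurj hle
  exact ⟨hsurj, hle⟩

variable [CompleteSpace F]

theorem sylvesterSolvable_of_norm_le {M₀ : E →L[𝕜] E} {M₁ : (F →L[𝕜] F)ˣ} {r : ℝ} (hd : 0 < d)
    (h₀ : ‖M₀‖ ≤ r) (h₁ : ‖(↑M₁⁻¹ : F →L[𝕜] F)‖ ≤ (r + d)⁻¹) :
    SylvesterSolvable M₀ (M₁ : F →L[𝕜] F) d := by
  set N : F →L[𝕜] F := ↑M₁⁻¹
  have hrd : 0 < r + d := by linarith [(norm_nonneg M₀).trans h₀]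
  have hNM : ∀ X : E →L[𝕜] F, N ∘L (↑M₁ ∘L X) = X := fun X => by
    rw [← comp_assoc, ← mul_def, Units.inv_mul, one_def, id_comp]
  have hMN : ∀ X : E →L[𝕜] F, ↑M₁ ∘L (N ∘L X) = X := fun X => by
    rw [← comp_assoc, ← mul_def, Units.mul_inv, one_def, id_comp]
  have hq : ‖N‖ * ‖M₀‖ < 1 :=
    calc ‖N‖ * ‖M₀‖ ≤ (r + d)⁻¹ * r := by gcongr
      _ < 1 := by rw [inv_mul_lt_iff₀ hrd]; linarith
  constructor
  · intro D
    set f : (E →L[𝕜] F) → E →L[𝕜] F := fun L => N ∘L (L ∘L M₀ - D)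
    have hf : ContractingWith (‖N‖ * ‖M₀‖).toNNReal f := by
      refine ⟨Real.toNNReal_lt_one.2 hq, LipschitzWith.of_dist_le' fun L L' => ?_⟩
      calc dist (f L) (f L') = ‖N ∘L ((L - L') ∘L M₀)‖ := by
            rw [dist_eq_norm, ← comp_sub, sub_sub_sub_cancel_right, sub_comp]
        _ ≤ ‖N‖ * (‖L - L'‖ * ‖M₀‖) := by
            grw [opNorm_comp_le, opNorm_comp_le]
        _ = ‖N‖ * ‖M₀‖ * dist L L' := by rw [dist_eq_norm]; ring
    set L := hf.fixedPoint f
    have hfix : N ∘L (L ∘L M₀ - D) = L := hf.fixedPoint_isFixedPt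
    have hM₁L : ↑M₁ ∘L L = L ∘L M₀ - D := by rw [← hMN (L ∘L M₀ - D), hfix]
    exact ⟨L, by rw [sylvester_apply, hM₁L, sub_sub_cancel]⟩
  · intro L
    have hL : L = N ∘L (L ∘L M₀ - sylvester M₀ M₁ L) := by
      rw [sylvester_apply, sub_sub_cancel, hNM]
    have : ‖L‖ ≤ (r + d)⁻¹ * (r * ‖L‖ + ‖sylvester M₀ M₁ L‖) :=
      calc ‖L‖ = ‖N ∘L (L ∘L M₀ - sylvester M₀ M₁ L)‖ := congrArg norm hL
        _ ≤ ‖N‖ * (‖L‖ * ‖M₀‖ + ‖sylvester M₀ M₁ L‖) := by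
            grw [opNorm_comp_le, norm_sub_le, opNorm_comp_le]
        _ ≤ (r + d)⁻¹ * (r * ‖L‖ + ‖sylvester M₀ M₁ L‖) := by
            rw [mul_comm ‖L‖]
            gcongr
    rw [le_inv_mul_iff₀ hrd] at this
    linarith

end Sylvester

section Adjoint

variable {𝕜 E F : Type*} [RCLike 𝕜]
  [NormedAddCommGroup E] [InnerProductSpace 𝕜 E] [CompleteSpace E]
  [NormedAddCommGroup F] [InnerProductSpace 𝕜 F] [CompleteSpace F]
  {A₀ : E →L[𝕜] E} {A₁ : F →L[𝕜] F} {d : ℝ}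

theorem ContinuousLinearMap.adjoint_sylvester (A₀ : E →L[𝕜] E) (A₁ : F →L[𝕜] F)
    (L : E →L[𝕜] F) :
    adjoint (sylvester A₀ A₁ L) = -sylvester (adjoint A₁) (adjoint A₀) (adjoint L) := by
  simp only [sylvester_apply, map_sub, adjoint_comp, neg_sub]

theorem SylvesterSolvable.of_adjoint (h : SylvesterSolvable (adjoint A₁) (adjoint A₀) d) :
    SylvesterSolvable A₀ A₁ d := by
  constructor
  · intro D
    obtain ⟨L, hL⟩ := h.surjective (-adjoint D)
    refine ⟨adjoint L, adjoint.injective ?_⟩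
    rw [adjoint_sylvester, adjoint_adjoint, hL, neg_neg]
  · intro L
    calc d * ‖L‖ = d * ‖adjoint L‖ := by rw [LinearIsometryEquiv.norm_map]
      _ ≤ ‖sylvester (adjoint A₁) (adjoint A₀) (adjoint L)‖ := h.mul_norm_le _
      _ = ‖sylvester A₀ A₁ L‖ := by
        rw [← norm_neg, ← adjoint_sylvester, LinearIsometryEquiv.norm_map]

end Adjoint

section Riccati

variable {𝕜 E F : Type*} [NontriviallyNormedField 𝕜]
  [NormedAddCommGroup E] [NormedSpace 𝕜 E] [NormedAddCommGroup F] [NormedSpace 𝕜 F]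
  {A₀ : E →L[𝕜] E} {A₁ : F →L[𝕜] F} {B : F →L[𝕜] E} {C K K' : E →L[𝕜] F} {d ρ : ℝ}

theorem ContinuousLinearMap.norm_comp_comp_le (K : E →L[𝕜] F) (B : F →L[𝕜] E) :
    ‖(K ∘L B) ∘L K‖ ≤ ‖B‖ * ‖K‖ ^ 2 :=
  calc ‖(K ∘L B) ∘L K‖ ≤ ‖K‖ * ‖B‖ * ‖K‖ := by grw [opNorm_comp_le, opNorm_comp_le]
    _ = ‖B‖ * ‖K‖ ^ 2 := by ring

theorem ContinuousLinearMap.norm_comp_comp_sub_comp_comp_le (K K' : E →L[𝕜] F)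
    (B : F →L[𝕜] E) :
    ‖(K ∘L B) ∘L K - (K' ∘L B) ∘L K'‖ ≤ ‖B‖ * (‖K‖ + ‖K'‖) * ‖K - K'‖ :=
  calc ‖(K ∘L B) ∘L K - (K' ∘L B) ∘L K'‖
      = ‖((K - K') ∘L B) ∘L K + (K' ∘L B) ∘L (K - K')‖ := by
        simp only [sub_comp, comp_sub]
        abel_nf
    _ ≤ ‖K - K'‖ * ‖B‖ * ‖K‖ + ‖K'‖ * ‖B‖ * ‖K - K'‖ := by
        grw [norm_add_le, opNorm_comp_le, opNorm_comp_le, opNorm_comp_le, opNorm_comp_le]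
    _ = ‖B‖ * (‖K‖ + ‖K'‖) * ‖K - K'‖ := by ring

theorem riccati_iff_sylvester_eq :
    K ∘L A₀ - A₁ ∘L K + (K ∘L B) ∘L K = C ↔ sylvester A₀ A₁ K = C - (K ∘L B) ∘L K := by
  rw [sylvester_apply, eq_sub_iff_add_eq]

namespace SylvesterSolvable

variable (hS : SylvesterSolvable A₀ A₁ d)
include hS

theorem mul_norm_le_of_sylvester_eq {L : E →L[𝕜] F}
    (hL : sylvester A₀ A₁ L = C - (K ∘L B) ∘L K) :
    d * ‖L‖ ≤ ‖C‖ + ‖B‖ * ‖K‖ ^ 2 :=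
  calc d * ‖L‖ ≤ ‖C - (K ∘L B) ∘L K‖ := hL ▸ hS.mul_norm_le L
    _ ≤ ‖C‖ + ‖B‖ * ‖K‖ ^ 2 := by grw [norm_sub_le, norm_comp_comp_le]

theorem mul_norm_sub_le_of_sylvester_eq {L L' : E →L[𝕜] F}
    (hL : sylvester A₀ A₁ L = C - (K ∘L B) ∘L K) (hL' : sylvester A₀ A₁ L' = C - (K' ∘L B) ∘L K')
    (hK : ‖K‖ ≤ ρ) (hK' : ‖K'‖ ≤ ρ) :
    d * ‖L - L'‖ ≤ 2 * ‖B‖ * ρ * ‖K - K'‖ :=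
  calc d * ‖L - L'‖ ≤ ‖(K' ∘L B) ∘L K' - (K ∘L B) ∘L K‖ := by
        simpa only [map_sub, hL, hL', sub_sub_sub_cancel_left] using hS.mul_norm_le (L - L')
    _ ≤ ‖B‖ * (‖K'‖ + ‖K‖) * ‖K' - K‖ := norm_comp_comp_sub_comp_comp_le K' K B
    _ ≤ 2 * ‖B‖ * ρ * ‖K - K'‖ := by
        rw [norm_sub_rev]
        grw [hK, hK']
        linarith

theorem riccati_unique (hρ : 2 * ‖B‖ * ρ < d) (hK : ‖K‖ ≤ ρ) (hK' : ‖K'‖ ≤ ρ)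
    (hKC : K ∘L A₀ - A₁ ∘L K + (K ∘L B) ∘L K = C)
    (hK'C : K' ∘L A₀ - A₁ ∘L K' + (K' ∘L B) ∘L K' = C) : K = K' := by
  have := hS.mul_norm_sub_le_of_sylvester_eq (riccati_iff_sylvester_eq.1 hKC)
    (riccati_iff_sylvester_eq.1 hK'C) hK hK'
  have : ‖K - K'‖ = 0 := by nlinarith [norm_nonneg (K - K')]
  rwa [norm_eq_zero, sub_eq_zero] at this

theorem exists_riccati [CompleteSpace F] (hρ₀ : 0 ≤ ρ) (hρ : ‖C‖ + ‖B‖ * ρ ^ 2 ≤ d * ρ)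
    (hρd : 2 * ‖B‖ * ρ < d) :
    ∃ K, ‖K‖ ≤ ρ ∧ K ∘L A₀ - A₁ ∘L K + (K ∘L B) ∘L K = C := by
  have hd : 0 < d := by nlinarith [norm_nonneg B]
  set Φ : (E →L[𝕜] F) → E →L[𝕜] F :=
    fun K => Function.surjInv hS.surjective (C - (K ∘L B) ∘L K)
  have hΦ : ∀ K, sylvester A₀ A₁ (Φ K) = C - (K ∘L B) ∘L K := fun K =>
    Function.surjInv_eq hS.surjective _
  set s := Metric.closedBall (0 : E →L[𝕜] F) ρ
  have hmem : ∀ {K}, K ∈ s ↔ ‖K‖ ≤ ρ := by simp [s]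
  have hmaps : Set.MapsTo Φ s s := fun K hK => by
    rw [hmem] at hK ⊢
    have := hS.mul_norm_le_of_sylvester_eq (hΦ K)
    grw [hK] at this
    exact le_of_mul_le_mul_left (this.trans hρ) hd
  have hlip : LipschitzOnWith (2 * ‖B‖ * ρ / d).toNNReal Φ s :=
    LipschitzOnWith.of_dist_le' fun K hK K' hK' => by
      rw [dist_eq_norm, dist_eq_norm, div_mul_eq_mul_div, le_div_iff₀ hd, mul_comm]
      exact hS.mul_norm_sub_le_of_sylvester_eq (hΦ K) (hΦ K') (hmem.1 hK) (hmem.1 hK')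
  have hcontr : ContractingWith _ (hmaps.restrict Φ s s) :=
    ⟨Real.toNNReal_lt_one.2 ((div_lt_one hd).2 hρd), hlip.mapsToRestrict hmaps⟩
  obtain ⟨K, hK, hfix, -⟩ := hcontr.exists_fixedPoint' Metric.isClosed_closedBall.isComplete
    hmaps (Metric.mem_closedBall_self hρ₀) (edist_ne_top _ _)
  have hKC := hΦ K
  rw [hfix.eq] at hKC
  exact ⟨K, hmem.1 hK, riccati_iff_sylvester_eq.2 hKC⟩

theorem riccati_existsUnique [CompleteSpace F] (hd : 0 < d) (hBC : ‖B‖ * ‖C‖ < d ^ 2 / 4) :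
    (∃! K : E →L[𝕜] F, 2 * ‖B‖ * ‖K‖ ≤ d ∧ K ∘L A₀ - A₁ ∘L K + (K ∘L B) ∘L K = C) ∧
      ∀ K : E →L[𝕜] F, 2 * ‖B‖ * ‖K‖ ≤ d → K ∘L A₀ - A₁ ∘L K + (K ∘L B) ∘L K = C →
        ‖K‖ ≤ smallRoot ‖B‖ ‖C‖ d := by
  have hρ := two_mul_mul_smallRoot_lt hBC hd
  have hbound : ∀ K : E →L[𝕜] F, 2 * ‖B‖ * ‖K‖ ≤ d →
      K ∘L A₀ - A₁ ∘L K + (K ∘L B) ∘L K = C → ‖K‖ ≤ smallRoot ‖B‖ ‖C‖ d :=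
    fun K hK hKC => le_smallRoot hBC hd hK (hS.mul_norm_le_of_sylvester_eq
      (riccati_iff_sylvester_eq.1 hKC))
  obtain ⟨K₀, hK₀, hK₀C⟩ := hS.exists_riccati (smallRoot_nonneg (norm_nonneg C) hd.le)
    (add_mul_smallRoot_sq hBC.le hd).le hρ
  refine ⟨⟨K₀, ⟨?_, hK₀C⟩, fun K ⟨hK, hKC⟩ =>
    hS.riccati_unique hρ (hbound K hK hKC) hK₀ hKC hK₀C⟩, hbound⟩
  grw [hK₀]
  exact hρ.le

end SylvesterSolvable

end Riccati

theorem IsSelfAdjoint.sylvesterSolvable {E F : Type*}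
    [NormedAddCommGroup E] [InnerProductSpace ℂ E] [CompleteSpace E]
    [NormedAddCommGroup F] [InnerProductSpace ℂ F] [CompleteSpace F]
    {A₀ : E →L[ℂ] E} {A₁ : F →L[ℂ] F} (hA₀ : IsSelfAdjoint A₀) (hA₁ : IsSelfAdjoint A₁) {d : ℝ}
    (hd : 0 < d) (hne : (spectrum ℝ A₀).Nonempty)
    (hgap : Disjoint (convexHull ℝ (spectrum ℝ A₀)) (spectrum ℝ A₁))
    (hdist : ∀ x ∈ spectrum ℝ A₀, ∀ y ∈ spectrum ℝ A₁, d ≤ |x - y|) :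
    SylvesterSolvable A₀ A₁ d := by
  obtain ⟨c, r, hr, h₀, h₁⟩ :=
    Real.exists_center_of_disjoint_convexHull (spectrum.isCompact A₀) hne hgap hdist
  obtain ⟨u, hu, hu_inv⟩ := hA₁.exists_units_sub_algebraMap (by linarith : 0 < r + d) h₁
  have := sylvesterSolvable_of_norm_le hd (hA₀.norm_sub_algebraMap_le hr h₀) hu_inv
  rw [hu, IsScalarTower.algebraMap_apply ℝ ℂ (E →L[ℂ] E),
    IsScalarTower.algebraMap_apply ℝ ℂ (F →L[ℂ] F)] at this
  exact this.of_sub_algebraMap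

theorem riccati_selfAdjoint_gap_existsUnique_general
    {H0 : Type*} [NormedAddCommGroup H0] [InnerProductSpace ℂ H0] [CompleteSpace H0]
    {H1 : Type*} [NormedAddCommGroup H1] [InnerProductSpace ℂ H1] [CompleteSpace H1]
    (A0 : H0 →L[ℂ] H0) (A1 : H1 →L[ℂ] H1)
    (hA0 : IsSelfAdjoint A0) (hA1 : IsSelfAdjoint A1)
    (d : ℝ)
    (hd : d = sInf {t : ℝ | ∃ μ ∈ spectrum ℂ A0, ∃ ν ∈ spectrum ℂ A1, t = dist μ ν})
    (hd0 : 0 < d)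
    (hgap :
      Disjoint (convexHull ℝ (Complex.re '' spectrum ℂ A0)) (Complex.re '' spectrum ℂ A1) ∨
      Disjoint (Complex.re '' spectrum ℂ A0) (convexHull ℝ (Complex.re '' spectrum ℂ A1)))
    (B : H1 →L[ℂ] H0) (C : H0 →L[ℂ] H1)
    (hBC : Real.sqrt (‖B‖ * ‖C‖) < d / 2) :
    (∃! K : H0 →L[ℂ] H1,
        2 * ‖B‖ * ‖K‖ ≤ d ∧ K ∘L A0 - A1 ∘L K + (K ∘L B) ∘L K = C) ∧
      ∀ K : H0 →L[ℂ] H1,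
        2 * ‖B‖ * ‖K‖ ≤ d → K ∘L A0 - A1 ∘L K + (K ∘L B) ∘L K = C →
          ‖K‖ ≤ ‖C‖ / (d / 2 + Real.sqrt (d ^ 2 / 4 - ‖B‖ * ‖C‖)) := by
  have hre₀ := hA0.spectrumRestricts.image
  have hre₁ := hA1.spectrumRestricts.image
  obtain ⟨hne₀, hne₁⟩ := Metric.nonempty_of_sInf_dist_pos (hd ▸ hd0)
  replace hne₀ : (spectrum ℝ A0).Nonempty := hre₀ ▸ hne₀.image _
  replace hne₁ : (spectrum ℝ A1).Nonempty := hre₁ ▸ hne₁.image _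
  have hdist : ∀ x ∈ spectrum ℝ A0, ∀ y ∈ spectrum ℝ A1, d ≤ |x - y| := fun x hx y hy => by
    simpa [hd, Complex.isometry_ofReal.dist_eq, Real.dist_eq] using Metric.sInf_dist_le
      (spectrum.algebraMap_mem ℂ hx) (spectrum.algebraMap_mem ℂ hy)
  have hS : SylvesterSolvable A0 A1 d := by
    rcases hgap with hgap | hgap
    · exact hA0.sylvesterSolvable hA1 hd0 hne₀ (hre₀ ▸ hre₁ ▸ hgap) hdist
    · refine .of_adjoint ?_
      rw [hA0.adjoint_eq, hA1.adjoint_eq]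
      exact hA1.sylvesterSolvable hA0 hd0 hne₁ (hre₀ ▸ hre₁ ▸ hgap.symm)
        fun y hy x hx => abs_sub_comm x y ▸ hdist x hx y hy
  have hBC' : ‖B‖ * ‖C‖ < d ^ 2 / 4 := by
    have := (Real.sqrt_lt' (by positivity)).1 hBC
    linarith
  exact hS.riccati_existsUnique hd0 hBC'

/-- Bounded-operator version of Theorem 4.7 (ii) of the paper: if `A0`, `A1` are bounded
self-adjoint operators with disjoint spectra separated by the distance `d > 0`, the convex
hull (in ℝ) of the (real) spectrum of one of them is disjoint from the spectrum of the
other, and `√(‖B‖‖C‖) < d/2`, then the Riccati equation `K A0 - A1 K + K B K = C` has a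
unique bounded solution `K` with `2‖B‖‖K‖ ≤ d`; moreover this solution satisfies
`‖K‖ ≤ ‖C‖ / (d/2 + √(d²/4 - ‖B‖‖C‖))`. -/
theorem riccati_selfAdjoint_gap_existsUnique
    {H0 : Type*} [NormedAddCommGroup H0] [InnerProductSpace ℂ H0] [CompleteSpace H0]
    {H1 : Type*} [NormedAddCommGroup H1] [InnerProductSpace ℂ H1] [CompleteSpace H1]
    (A0 : H0 →L[ℂ] H0) (A1 : H1 →L[ℂ] H1)
    (hA0 : IsSelfAdjoint A0) (hA1 : IsSelfAdjoint A1)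
    (hdisj : spectrum ℂ A0 ∩ spectrum ℂ A1 = ∅)
    (d : ℝ)
    (hd : d = sInf {t : ℝ | ∃ μ ∈ spectrum ℂ A0, ∃ ν ∈ spectrum ℂ A1, t = dist μ ν})
    (hd0 : 0 < d)
    (hgap :
      Disjoint (convexHull ℝ (Complex.re '' spectrum ℂ A0)) (Complex.re '' spectrum ℂ A1) ∨
      Disjoint (Complex.re '' spectrum ℂ A0) (convexHull ℝ (Complex.re '' spectrum ℂ A1)))
    (B : H1 →L[ℂ] H0) (C : H0 →L[ℂ] H1)
    (hBC : Real.sqrt (‖B‖ * ‖C‖) < d / 2) :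
    (∃! K : H0 →L[ℂ] H1,
        2 * ‖B‖ * ‖K‖ ≤ d ∧ K ∘L A0 - A1 ∘L K + (K ∘L B) ∘L K = C) ∧
      ∀ K : H0 →L[ℂ] H1,
        2 * ‖B‖ * ‖K‖ ≤ d → K ∘L A0 - A1 ∘L K + (K ∘L B) ∘L K = C →
          ‖K‖ ≤ ‖C‖ / (d / 2 + Real.sqrt (d ^ 2 / 4 - ‖B‖ * ‖C‖)) :=
  riccati_selfAdjoint_gap_existsUnique_general A0 A1 hA0 hA1 d hd hd0 hgap B C hBC
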